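/- arXiv:1903.10358 — 4 statements merged into one kernel-verified Lean document; each statement's English description precedes it below -/
import Mathlib

section
/- Let H be a complex Hilbert space and let S be a normal bounded linear operator on H with Cartesian decomposition S = A + iC such that a₁ ≤ A ≤ a₂ and c₁ ≤ C ≤ c₂ for real numbers a₁, a₂, c₁, c₂. Set z = (a₁+a₂)/2 + i(c₁+c₂)/2. Then ‖S − z·I‖ ≤ √((a₂−a₁)²/2 + (c₂−c₁)²/2). -/
/-!
Write `S - z = (A - α) + i (C - γ)` with `α, γ` the midpoints of the two intervals. Each summand
is self-adjoint with numerical range in an interval of half-width `(a₂ - a₁)/2`, resp.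
`(c₂ - c₁)/2`, and a self-adjoint operator has norm equal to its numerical radius. The triangle
inequality and `(p + q)² ≤ 2 (p² + q²)` finish the proof.
-/

open RCLike ContinuousLinearMap

section

variable {𝕜 E : Type*} [RCLike 𝕜] [NormedAddCommGroup E] [InnerProductSpace 𝕜 E] [CompleteSpace E]

theorem IsSelfAdjoint.norm_le_of_abs_re_inner_le {T : E →L[𝕜] E} (hT : IsSelfAdjoint T) {M : ℝ}
    (hM : 0 ≤ M) (h : ∀ x, |re (inner 𝕜 (T x) x)| ≤ M * ‖x‖ ^ 2) : ‖T‖ ≤ M := by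
  rw [T.norm_eq_iSup_rayleighQuotient hT.isSymmetric]
  refine ciSup_le fun x => ?_
  rcases eq_or_ne x 0 with rfl | hx
  · simpa using hM
  rw [rayleighQuotient, reApplyInnerSelf_apply, abs_div, abs_sq, div_le_iff₀ (by positivity)]
  exact h x

theorem IsSelfAdjoint.norm_sub_midpoint_smul_one_le [Nontrivial E] {T : E →L[𝕜] E}
    (hT : IsSelfAdjoint T) {a b : ℝ} (ha : ∀ x, a * ‖x‖ ^ 2 ≤ re (inner 𝕜 (T x) x))
    (hb : ∀ x, re (inner 𝕜 (T x) x) ≤ b * ‖x‖ ^ 2) :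
    ‖T - (((a + b) / 2 : ℝ) : 𝕜) • (1 : E →L[𝕜] E)‖ ≤ (b - a) / 2 := by
  obtain ⟨x₀, hx₀⟩ := exists_ne (0 : E)
  have hab : a ≤ b :=
    le_of_mul_le_mul_right ((ha x₀).trans (hb x₀)) (by positivity)
  have hmid : IsSelfAdjoint ((((a + b) / 2 : ℝ) : 𝕜) • (1 : E →L[𝕜] E)) := by
    simp [IsSelfAdjoint, star_smul, conj_ofReal]
  refine (hT.sub hmid).norm_le_of_abs_re_inner_le (by linarith) fun x => ?_
  have hshift : re (inner 𝕜 ((T - (((a + b) / 2 : ℝ) : 𝕜) • (1 : E →L[𝕜] E)) x) x)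
      = re (inner 𝕜 (T x) x) - (a + b) / 2 * ‖x‖ ^ 2 := by
    simp only [sub_apply, smul_apply, one_apply_eq_self, inner_sub_left, inner_smul_left,
      conj_ofReal, map_sub, re_ofReal_mul, inner_self_eq_norm_sq]
  rw [hshift, abs_le]
  constructor <;> linarith [ha x, hb x]

theorem Real.add_le_sqrt_two_mul_sq_add_sq (p q : ℝ) : p + q ≤ √(2 * (p ^ 2 + q ^ 2)) :=
  (le_abs_self _).trans (Real.abs_le_sqrt (by nlinarith [sq_nonneg (p - q)]))

end

theorem norm_sub_center_smul_id_le_general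
    {H : Type*} [NormedAddCommGroup H] [InnerProductSpace ℂ H] [CompleteSpace H]
    (S A C : H →L[ℂ] H)
    (hA : IsSelfAdjoint A) (hC : IsSelfAdjoint C)
    (hSdec : S = A + Complex.I • C)
    (a₁ a₂ c₁ c₂ : ℝ)
    (hA₁ : ∀ x : H, a₁ * ‖x‖ ^ 2 ≤ (inner ℂ (A x) x : ℂ).re)
    (hA₂ : ∀ x : H, (inner ℂ (A x) x : ℂ).re ≤ a₂ * ‖x‖ ^ 2)
    (hC₁ : ∀ x : H, c₁ * ‖x‖ ^ 2 ≤ (inner ℂ (C x) x : ℂ).re)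
    (hC₂ : ∀ x : H, (inner ℂ (C x) x : ℂ).re ≤ c₂ * ‖x‖ ^ 2) :
    ‖S - ((((a₁ + a₂) / 2 : ℝ) : ℂ) + Complex.I * (((c₁ + c₂) / 2 : ℝ) : ℂ)) • (1 : H →L[ℂ] H)‖ ≤
      Real.sqrt ((a₂ - a₁) ^ 2 / 2 + (c₂ - c₁) ^ 2 / 2) := by
  rcases subsingleton_or_nontrivial H with _ | _
  · simp [norm_of_subsingleton]
  set TA := A - (((a₁ + a₂) / 2 : ℝ) : ℂ) • (1 : H →L[ℂ] H)
  set TC := C - (((c₁ + c₂) / 2 : ℝ) : ℂ) • (1 : H →L[ℂ] H)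
  have hdec : S - ((((a₁ + a₂) / 2 : ℝ) : ℂ) + Complex.I * (((c₁ + c₂) / 2 : ℝ) : ℂ)) •
      (1 : H →L[ℂ] H) = TA + Complex.I • TC := by
    rw [hSdec]; module
  calc _ = ‖TA + Complex.I • TC‖ := by rw [hdec]
    _ ≤ ‖TA‖ + ‖TC‖ := by grw [norm_add_le, norm_smul, Complex.norm_I, one_mul]
    _ ≤ (a₂ - a₁) / 2 + (c₂ - c₁) / 2 :=
      add_le_add (hA.norm_sub_midpoint_smul_one_le hA₁ hA₂)
        (hC.norm_sub_midpoint_smul_one_le hC₁ hC₂)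
    _ ≤ _ := by
      convert Real.add_le_sqrt_two_mul_sq_add_sq ((a₂ - a₁) / 2) ((c₂ - c₁) / 2) using 2
      ring

/-- For a normal operator `S = A + iC` with `a₁ ≤ A ≤ a₂`, `c₁ ≤ C ≤ c₂`,
and `z = (a₁+a₂)/2 + i(c₁+c₂)/2`, we have `‖S − z·I‖ ≤ √((a₂−a₁)²/2 + (c₂−c₁)²/2)`. -/
theorem norm_sub_center_smul_id_le
    {H : Type*} [NormedAddCommGroup H] [InnerProductSpace ℂ H] [CompleteSpace H]
    (S A C : H →L[ℂ] H) (hS : IsStarNormal S)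
    (hA : IsSelfAdjoint A) (hC : IsSelfAdjoint C)
    (hSdec : S = A + Complex.I • C)
    (a₁ a₂ c₁ c₂ : ℝ)
    (hA₁ : ∀ x : H, a₁ * ‖x‖ ^ 2 ≤ (inner ℂ (A x) x : ℂ).re)
    (hA₂ : ∀ x : H, (inner ℂ (A x) x : ℂ).re ≤ a₂ * ‖x‖ ^ 2)
    (hC₁ : ∀ x : H, c₁ * ‖x‖ ^ 2 ≤ (inner ℂ (C x) x : ℂ).re)
    (hC₂ : ∀ x : H, (inner ℂ (C x) x : ℂ).re ≤ c₂ * ‖x‖ ^ 2) :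
    ‖S - ((((a₁ + a₂) / 2 : ℝ) : ℂ) + Complex.I * (((c₁ + c₂) / 2 : ℝ) : ℂ)) • (1 : H →L[ℂ] H)‖ ≤
      Real.sqrt ((a₂ - a₁) ^ 2 / 2 + (c₂ - c₁) ^ 2 / 2) :=
  norm_sub_center_smul_id_le_general S A C hA hC hSdec a₁ a₂ c₁ c₂ hA₁ hA₂ hC₁ hC₂
end

section
/- Let H be a complex Hilbert space and let S, T be normal bounded linear operators on H with Cartesian decompositions S = A + iC and T = B + iD such that C and D are positive. Then ‖ST − TS‖ ≤ (1/2)·√(4‖A‖² + ‖C‖²)·√(4‖B‖² + ‖D‖²). -/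
/-!
The commutator `ST - TS` does not change when `S` and `T` are shifted by scalars. Shifting `S` by
`i‖C‖/2` gives `A + i(C - ‖C‖/2)`, whose real and imaginary parts still commute because `S` is
normal; hence its norm squared is at most `‖A‖² + ‖C - ‖C‖/2‖² ≤ ‖A‖² + ‖C‖²/4`, the last step
because `0 ≤ C ≤ ‖C‖`. The bound `‖PQ - QP‖ ≤ 2‖P‖‖Q‖` for the shifted operators finishes.
-/

open Complex ComplexStarModule

section StarModule

variable {A : Type*} [AddCommGroup A] [Module ℂ A] [StarAddMonoid A] [StarModule ℂ A]

lemma IsSelfAdjoint.realPart_add_I_smul {a c : A} (ha : IsSelfAdjoint a) (hc : IsSelfAdjoint c) :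
    (ℜ (a + I • c) : A) = a := by
  simp [realPart_I_smul, hc.imaginaryPart, ha.coe_realPart]

lemma IsSelfAdjoint.imaginaryPart_add_I_smul {a c : A} (ha : IsSelfAdjoint a)
    (hc : IsSelfAdjoint c) : (ℑ (a + I • c) : A) = c := by
  simp [imaginaryPart_I_smul, ha.imaginaryPart, hc.coe_realPart]

end StarModule

lemma isStarNormal_add_I_smul_iff {A : Type*} [NonUnitalNonAssocRing A] [StarRing A] [Module ℂ A]
    [IsScalarTower ℂ A A] [SMulCommClass ℂ A A] [StarModule ℂ A] {a c : A}
    (ha : IsSelfAdjoint a) (hc : IsSelfAdjoint c) :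
    IsStarNormal (a + I • c) ↔ Commute a c := by
  rw [isStarNormal_iff_commute_realPart_imaginaryPart, ha.realPart_add_I_smul hc,
    ha.imaginaryPart_add_I_smul hc]

lemma norm_add_I_smul_sq_le {A : Type*} [NonUnitalCStarAlgebra A] {a c : A}
    (ha : IsSelfAdjoint a) (hc : IsSelfAdjoint c) (hac : Commute a c) :
    ‖a + I • c‖ ^ 2 ≤ ‖a‖ ^ 2 + ‖c‖ ^ 2 := by
  have := (isStarNormal_add_I_smul_iff ha hc).mpr hac
  calc ‖a + I • c‖ ^ 2 = ‖a * a + c * c‖ := by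
        rw [sq, ← CStarRing.norm_star_mul_self, star_mul_self_eq_realPart_sq_add_imaginaryPart_sq,
          ha.realPart_add_I_smul hc, ha.imaginaryPart_add_I_smul hc]
    _ ≤ ‖a * a‖ + ‖c * c‖ := norm_add_le _ _
    _ = ‖a‖ ^ 2 + ‖c‖ ^ 2 := by rw [ha.norm_mul_self, hc.norm_mul_self]

lemma lie_sub_algebraMap_sub_algebraMap {R A : Type*} [CommRing R] [Ring A] [Algebra R A]
    (x y : A) (r s : R) : ⁅x - algebraMap R A r, y - algebraMap R A s⁆ = ⁅x, y⁆ := by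
  simp only [Ring.lie_def, sub_mul, mul_sub, Algebra.commutes, ← map_mul, mul_comm r s]
  abel

lemma norm_lie_le {A : Type*} [NonUnitalNormedRing A] (x y : A) : ‖⁅x, y⁆‖ ≤ 2 * ‖x‖ * ‖y‖ :=
  calc ‖⁅x, y⁆‖ ≤ ‖x * y‖ + ‖y * x‖ := by rw [Ring.lie_def]; exact norm_sub_le _ _
    _ ≤ ‖x‖ * ‖y‖ + ‖y‖ * ‖x‖ := add_le_add (norm_mul_le _ _) (norm_mul_le _ _)
    _ = 2 * ‖x‖ * ‖y‖ := by ring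

section Order

variable {A : Type*} [CStarAlgebra A] [PartialOrder A] [StarOrderedRing A]

lemma IsSelfAdjoint.norm_le_of_mem_Icc {a : A} {r : ℝ} (ha : IsSelfAdjoint a) (hr : 0 ≤ r)
    (h : a ∈ Set.Icc (-algebraMap ℝ A r) (algebraMap ℝ A r)) : ‖a‖ ≤ r := by
  obtain _ | _ := subsingleton_or_nontrivial A
  · simpa [Subsingleton.elim a 0] using hr
  rcases CStarAlgebra.norm_or_neg_norm_mem_spectrum ha with h' | h'
  · exact (le_algebraMap_iff_spectrum_le ha).mp h.2 _ h'
  · rw [← map_neg] at h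
    linarith [(algebraMap_le_iff_le_spectrum ha).mp h.1 _ h']

lemma norm_sub_algebraMap_half_norm_le {c : A} (hc : 0 ≤ c) :
    ‖c - algebraMap ℝ A (‖c‖ / 2)‖ ≤ ‖c‖ / 2 := by
  refine (hc.isSelfAdjoint.sub (.algebraMap A (.all _))).norm_le_of_mem_Icc (by positivity)
    ⟨by simpa using hc, ?_⟩
  rw [sub_le_iff_le_add, ← map_add, add_halves]
  exact hc.isSelfAdjoint.le_algebraMap_norm_self

lemma two_mul_norm_add_I_smul_sub_algebraMap_le {a c : A} (ha : IsSelfAdjoint a) (hc : 0 ≤ c)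
    (hac : Commute a c) :
    2 * ‖a + I • c - algebraMap ℂ A (I * (‖c‖ / 2 : ℝ))‖ ≤ √(4 * ‖a‖ ^ 2 + ‖c‖ ^ 2) := by
  set c' := c - algebraMap ℝ A (‖c‖ / 2)
  have hc' : IsSelfAdjoint c' := hc.isSelfAdjoint.sub (.algebraMap A (.all _))
  have hac' : Commute a c' := hac.sub_right (Algebra.commutes _ _).symm
  have hshift : a + I • c - algebraMap ℂ A (I * (‖c‖ / 2 : ℝ)) = a + I • c' := by
    rw [map_mul, Algebra.algebraMap_eq_smul_one I, smul_mul_assoc, one_mul,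
      ← Complex.coe_algebraMap, ← IsScalarTower.algebraMap_apply, smul_sub, add_sub_assoc]
  have hbound := norm_add_I_smul_sq_le ha hc' hac'
  have hhalf := norm_sub_algebraMap_half_norm_le hc
  rw [hshift, Real.le_sqrt (by positivity) (by positivity)]
  nlinarith [norm_nonneg c']

end Order

/-- For normal `S = A + iC`, `T = B + iD` with `C, D` positive,
`‖ST − TS‖ ≤ (1/2)√(4‖A‖² + ‖C‖²)·√(4‖B‖² + ‖D‖²)`. -/
theorem commutator_norm_bound_of_positive_imaginary_parts
    {H : Type*} [NormedAddCommGroup H] [InnerProductSpace ℂ H] [CompleteSpace H]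
    (S T A B C D : H →L[ℂ] H)
    (hS : IsStarNormal S) (hT : IsStarNormal T)
    (hA : IsSelfAdjoint A) (hB : IsSelfAdjoint B)
    (hSdec : S = A + Complex.I • C) (hTdec : T = B + Complex.I • D)
    (hC : C.IsPositive) (hD : D.IsPositive) :
    ‖S * T - T * S‖ ≤
      (1 / 2) * Real.sqrt (4 * ‖A‖ ^ 2 + ‖C‖ ^ 2) * Real.sqrt (4 * ‖B‖ ^ 2 + ‖D‖ ^ 2) := by
  rw [← C.nonneg_iff_isPositive] at hC
  rw [← D.nonneg_iff_isPositive] at hD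
  subst hSdec hTdec
  have hAC := (isStarNormal_add_I_smul_iff hA hC.isSelfAdjoint).mp hS
  have hBD := (isStarNormal_add_I_smul_iff hB hD.isSelfAdjoint).mp hT
  set P := A + I • C - algebraMap ℂ _ (I * (‖C‖ / 2 : ℝ))
  set Q := B + I • D - algebraMap ℂ _ (I * (‖D‖ / 2 : ℝ))
  calc ‖(A + I • C) * (B + I • D) - (B + I • D) * (A + I • C)‖ = ‖⁅P, Q⁆‖ := by
        rw [lie_sub_algebraMap_sub_algebraMap, Ring.lie_def]
    _ ≤ 2 * ‖P‖ * ‖Q‖ := norm_lie_le P Q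
    _ = 1 / 2 * (2 * ‖P‖) * (2 * ‖Q‖) := by ring
    _ ≤ _ := by
      gcongr
      · exact two_mul_norm_add_I_smul_sub_algebraMap_le hA hC hAC
      · exact two_mul_norm_add_I_smul_sub_algebraMap_le hB hD hBD
end

section
/- Let H be a complex Hilbert space and let S be a bounded linear operator on H with Cartesian decomposition S = A + iC such that A and C are positive. Then ‖S*S − SS*‖ ≤ (1/2)·(‖A‖² + ‖C‖²). -/
/-!
The self-commutator of `S = A + iC` is `2i(AC - CA)`. Replacing `A` and `C` by `A - ‖A‖/2` and
`C - ‖C‖/2` does not change the commutator `AC - CA`, and since the spectrum of a positive `A` lies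
in `[0, ‖A‖]`, the shifted operators have norms at most `‖A‖/2` and `‖C‖/2`. Hence
`‖AC - CA‖ ≤ ‖A‖‖C‖/2`, and `‖A‖‖C‖ ≤ (‖A‖² + ‖C‖²)/2` finishes the proof.
-/

open Complex

lemma star_mul_self_sub_self_mul_star_add_I_smul {A : Type*} [Ring A] [StarRing A]
    [Algebra ℂ A] [StarModule ℂ A] {a c : A} (ha : IsSelfAdjoint a) (hc : IsSelfAdjoint c) :
    star (a + I • c) * (a + I • c) - (a + I • c) * star (a + I • c) =
      (2 * I) • (a * c - c * a) := by
  rw [star_add, star_smul, ha.star_eq, hc.star_eq, Complex.star_def, conj_I]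
  simp only [add_mul, mul_add, smul_mul_assoc, mul_smul_comm]
  module

lemma commutator_sub_algebraMap {R A : Type*} [CommRing R] [Ring A] [Algebra R A]
    (a c : A) (r s : R) :
    (a - algebraMap R A r) * (c - algebraMap R A s) -
      (c - algebraMap R A s) * (a - algebraMap R A r) = a * c - c * a := by
  simp only [Algebra.algebraMap_eq_smul_one, sub_mul, mul_sub, smul_mul_assoc, mul_smul_comm,
    one_mul, mul_one]
  module

namespace CStarAlgebra

variable {A : Type*} [CStarAlgebra A] [PartialOrder A] [StarOrderedRing A]

lemma norm_sub_algebraMap_half_norm_le {a : A} (ha : 0 ≤ a) :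
    ‖a - algebraMap ℝ A (‖a‖ / 2)‖ ≤ ‖a‖ / 2 := by
  nontriviality A
  have hsa : IsSelfAdjoint a := .of_nonneg ha
  have hcfc : a - algebraMap ℝ A (‖a‖ / 2) = cfc (fun x : ℝ => x - ‖a‖ / 2) a := by
    rw [cfc_sub _ _ a, cfc_id' ℝ a, cfc_const _ _ hsa]
  rw [hcfc]
  refine norm_cfc_le (by positivity) fun x hx => ?_
  have hx₀ : 0 ≤ x := spectrum_nonneg_of_nonneg ha hx
  have hx₁ : x ≤ ‖a‖ := (Real.le_norm_self x).trans (spectrum.norm_le_norm_of_mem hx)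
  rw [Real.norm_eq_abs, abs_le]
  constructor <;> linarith

lemma norm_commutator_le_of_nonneg {a c : A} (ha : 0 ≤ a) (hc : 0 ≤ c) :
    ‖a * c - c * a‖ ≤ ‖a‖ * ‖c‖ / 2 := by
  set a' := a - algebraMap ℝ A (‖a‖ / 2)
  set c' := c - algebraMap ℝ A (‖c‖ / 2)
  have ha' : ‖a'‖ ≤ ‖a‖ / 2 := norm_sub_algebraMap_half_norm_le ha
  have hc' : ‖c'‖ ≤ ‖c‖ / 2 := norm_sub_algebraMap_half_norm_le hc
  calc ‖a * c - c * a‖ = ‖a' * c' - c' * a'‖ := by rw [commutator_sub_algebraMap]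
    _ ≤ ‖a'‖ * ‖c'‖ + ‖c'‖ * ‖a'‖ :=
        (norm_sub_le _ _).trans (add_le_add (norm_mul_le _ _) (norm_mul_le _ _))
    _ ≤ ‖a‖ / 2 * (‖c‖ / 2) + ‖c‖ / 2 * (‖a‖ / 2) := by gcongr
    _ = ‖a‖ * ‖c‖ / 2 := by ring

end CStarAlgebra

/-- For `S = A + iC` with `A, C` positive,
`‖S*S − SS*‖ ≤ (1/2)(‖A‖² + ‖C‖²)`. -/
theorem self_commutator_norm_bound
    {H : Type*} [NormedAddCommGroup H] [InnerProductSpace ℂ H] [CompleteSpace H]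
    (S A C : H →L[ℂ] H)
    (hSdec : S = A + Complex.I • C)
    (hA : A.IsPositive) (hC : C.IsPositive) :
    ‖ContinuousLinearMap.adjoint S * S - S * ContinuousLinearMap.adjoint S‖ ≤
      (1 / 2) * (‖A‖ ^ 2 + ‖C‖ ^ 2) := by
  rw [← ContinuousLinearMap.star_eq_adjoint, hSdec,
    star_mul_self_sub_self_mul_star_add_I_smul hA.isSelfAdjoint hC.isSelfAdjoint, norm_smul]
  have hAC := CStarAlgebra.norm_commutator_le_of_nonneg
    ((ContinuousLinearMap.nonneg_iff_isPositive A).2 hA)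
    ((ContinuousLinearMap.nonneg_iff_isPositive C).2 hC)
  have h2I : ‖(2 * I : ℂ)‖ = 2 := by simp
  rw [h2I]
  nlinarith [sq_nonneg (‖A‖ - ‖C‖)]
end

section
/- Let n be a finite index type, let S, T be positive semidefinite n×n complex matrices, and let X be any n×n complex matrix. Then the Frobenius (Hilbert–Schmidt) norm satisfies ‖SX − XT‖₂ ≤ ‖X‖₂·(‖S‖₂² + ‖T‖₂²)^{1/2}. -/
open scoped Matrix ComplexOrder

attribute [local instance] Matrix.frobeniusSeminormedAddCommGroup

/-- The Frobenius (Hilbert–Schmidt) norm of a matrix: `(Σᵢⱼ |Mᵢⱼ|²)^{1/2}`. -/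
noncomputable def frobNorm {n : Type*} [Fintype n] (M : Matrix n n ℂ) : ℝ :=
  Real.sqrt (∑ i, ∑ j, ‖M i j‖ ^ 2)

lemma frobNorm_eq_norm {n : Type*} [Fintype n] (M : Matrix n n ℂ) :
    frobNorm M = ‖M‖ := by
  rw [frobNorm, Matrix.frobenius_norm_def, Real.sqrt_eq_rpow]
  congr 1
  refine Finset.sum_congr rfl fun i _ => Finset.sum_congr rfl fun j _ => ?_
  rw [show (2:ℝ) = ((2:ℕ):ℝ) by norm_num, Real.rpow_natCast]

lemma frobNorm_nonneg {n : Type*} [Fintype n] (M : Matrix n n ℂ) :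
    0 ≤ frobNorm M := Real.sqrt_nonneg _

lemma frobNorm_sq {n : Type*} [Fintype n] (M : Matrix n n ℂ) :
    frobNorm M ^ 2 = ∑ i, ∑ j, ‖M i j‖ ^ 2 := by
  rw [frobNorm, Real.sq_sqrt]
  positivity

lemma psd_diag_re_nonneg {n : Type*} [Fintype n] {M : Matrix n n ℂ}
    (hM : M.PosSemidef) (i : n) : 0 ≤ (M i i).re := by
  classical
  have h := hM.dotProduct_mulVec_nonneg (Pi.single i 1)
  have h2 : (0 : ℂ) ≤ M i i := by simpa [dotProduct, Matrix.mulVec,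
    Pi.single_apply, Finset.sum_ite_eq', Finset.mul_sum] using h
  exact (Complex.le_def.mp h2).1

lemma trace_mul_psd_re_nonneg {n : Type*} [Fintype n] {A B : Matrix n n ℂ}
    (hA : A.PosSemidef) (hB : B.PosSemidef) : 0 ≤ ((A * B).trace).re := by
  classical
  obtain ⟨C, rfl⟩ : ∃ C : Matrix n n ℂ, A = Cᴴ * C := by
    open scoped MatrixOrder in
    obtain ⟨C, rfl⟩ := CStarAlgebra.nonneg_iff_eq_star_mul_self.mp hA.nonneg
    exact ⟨C, rfl⟩
  have h1 : (Cᴴ * C * B).trace = (C * B * Cᴴ).trace :=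
    (Matrix.trace_mul_cycle C B Cᴴ).symm
  have h2 : (C * B * Cᴴ).PosSemidef := hB.mul_mul_conjTranspose_same C
  rw [h1, Matrix.trace]
  simp only [Complex.re_sum]
  exact Finset.sum_nonneg fun i _ => psd_diag_re_nonneg h2 i

/-- for positive semidefinite `S, T` and any `X`,
`‖SX − XT‖₂ ≤ ‖X‖₂·(‖S‖₂² + ‖T‖₂²)^{1/2}`. -/
theorem frobNorm_SX_sub_XT_le
    {n : Type*} [Fintype n] (S T X : Matrix n n ℂ)
    (hS : S.PosSemidef) (hT : T.PosSemidef) :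
    frobNorm (S * X - X * T) ≤ frobNorm X * Real.sqrt (frobNorm S ^ 2 + frobNorm T ^ 2) := by
  set A := S * X with hAdef
  set B := X * T with hBdef
  -- cross term nonneg
  have hcross : 0 ≤ ((Aᴴ * B).trace).re := by
    have hAH : Aᴴ * B = (Xᴴ * S * X) * T := by
      simp [hAdef, hBdef, Matrix.conjTranspose_mul, hS.isHermitian.eq, Matrix.mul_assoc]
    rw [hAH]
    exact trace_mul_psd_re_nonneg (hS.conjTranspose_mul_mul_same X) hT
  -- pointwise expansion
  have point : ∀ a b : ℂ, ‖a - b‖ ^ 2 = ‖a‖ ^ 2 + ‖b‖ ^ 2 - 2 * ((starRingEnd ℂ) a * b).re := by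
    intro a b
    simp only [← Complex.normSq_eq_norm_sq, Complex.normSq_apply,
      Complex.sub_re, Complex.sub_im, Complex.mul_re, Complex.mul_im,
      Complex.conj_re, Complex.conj_im]
    ring
  have htr : ((Aᴴ * B).trace).re = ∑ i, ∑ j, ((starRingEnd ℂ) (A i j) * B i j).re := by
    rw [Matrix.trace]
    simp only [Complex.re_sum, Matrix.diag_apply, Matrix.mul_apply,
      Matrix.conjTranspose_apply]
    rw [Finset.sum_comm]
    simp [Complex.re_sum]
  have hsum : ∑ i, ∑ j, ‖(A - B) i j‖ ^ 2
      = (∑ i, ∑ j, ‖A i j‖ ^ 2) + (∑ i, ∑ j, ‖B i j‖ ^ 2)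
        - 2 * ((Aᴴ * B).trace).re := by
    rw [htr]
    simp only [Matrix.sub_apply, point, Finset.mul_sum]
    rw [← Finset.sum_add_distrib, ← Finset.sum_sub_distrib]
    congr 1; ext i
    rw [← Finset.sum_add_distrib, ← Finset.sum_sub_distrib]
  have hkey : frobNorm (A - B) ^ 2 ≤ frobNorm A ^ 2 + frobNorm B ^ 2 := by
    rw [frobNorm_sq, frobNorm_sq, frobNorm_sq, hsum]
    linarith
  have hA2 : frobNorm A ≤ frobNorm S * frobNorm X := by
    simp only [frobNorm_eq_norm, hAdef]
    exact Matrix.frobenius_norm_mul S X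
  have hB2 : frobNorm B ≤ frobNorm X * frobNorm T := by
    simp only [frobNorm_eq_norm, hBdef]
    exact Matrix.frobenius_norm_mul X T
  have h3 : frobNorm A ^ 2 + frobNorm B ^ 2
      ≤ frobNorm X ^ 2 * (frobNorm S ^ 2 + frobNorm T ^ 2) := by
    have := pow_le_pow_left₀ (frobNorm_nonneg A) hA2 2
    have := pow_le_pow_left₀ (frobNorm_nonneg B) hB2 2
    nlinarith [frobNorm_nonneg A, frobNorm_nonneg B]
  have h4 : frobNorm (A - B) ^ 2 ≤ (frobNorm X * Real.sqrt (frobNorm S ^ 2 + frobNorm T ^ 2)) ^ 2 := by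
    rw [mul_pow, Real.sq_sqrt (add_nonneg (sq_nonneg _) (sq_nonneg _))]
    linarith
  have h5 : 0 ≤ frobNorm X * Real.sqrt (frobNorm S ^ 2 + frobNorm T ^ 2) :=
    mul_nonneg (frobNorm_nonneg X) (Real.sqrt_nonneg _)
  nlinarith [frobNorm_nonneg (A - B)]
end
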